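/- arXiv:1610.09783 — 2 statements merged into one kernel-verified Lean document; each statement's English description precedes it below -/
import Mathlib

section
/- Let M be a mixed graph with no isolated vertices, with underlying graph M_U. Then E_{R_H}(M) ≥ 2√(R_{-1}(M_U)). -/
/-!
The eigenvalues `μᵢ` of `R_H(M)` are real, their sum is `tr R_H(M) = 0`, and the sum of their
squares is `tr R_H(M)² = Σ_{k,l} |R_H(M)_{kl}|² = 2 R₋₁(M_U)`, because every nonzero entry of
`H(M)` has modulus one. For any real numbers, `(Σ|μᵢ|)² + (Σμᵢ)² ≥ 2 Σμᵢ²`, since each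
off-diagonal term `|μᵢμⱼ| + μᵢμⱼ` is nonnegative; hence `E_{R_H}(M)² ≥ 4 R₋₁(M_U)`.
-/

open Matrix BigOperators

noncomputable section
open scoped Classical

/-- A mixed graph on vertex set `V`, encoded by its Hermitian-adjacency matrix:
entries are `1` for undirected edges, `i`/`-i` for arcs, `0` otherwise. -/
structure MixedGraph (V : Type) [Fintype V] [DecidableEq V] where
  h : Matrix V V ℂ
  herm : h.IsHermitian
  loopless : ∀ k, h k k = 0
  entries : ∀ k l, h k l = 0 ∨ h k l = 1 ∨ h k l = Complex.I ∨ h k l = -Complex.I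

namespace MixedGraph

variable {V : Type} [Fintype V] [DecidableEq V]

/-- Degree of a vertex in the underlying graph. -/
def deg (M : MixedGraph V) (k : V) : ℕ :=
  (Finset.univ.filter fun l => M.h k l ≠ 0).card

/-- The Hermitian–Randić matrix of a mixed graph. -/
def RH (M : MixedGraph V) : Matrix V V ℂ :=
  fun k l => M.h k l / ((Real.sqrt (M.deg k) * Real.sqrt (M.deg l) : ℝ) : ℂ)

theorem RH_isHermitian (M : MixedGraph V) : (M.RH).IsHermitian := by
  ext k l
  simp only [RH, Matrix.conjTranspose_apply, star_div₀, Complex.star_def,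
    Complex.conj_ofReal, M.herm.apply k l, mul_comm (Real.sqrt (M.deg l))]

/-- The Hermitian–Randić energy: sum of absolute values of the eigenvalues of `RH`. -/
def energyRH (M : MixedGraph V) : ℝ := ∑ i, |M.RH_isHermitian.eigenvalues i|

/-- The Hermitian energy: sum of absolute values of the eigenvalues of `H(M)`. -/
def energyH (M : MixedGraph V) : ℝ := ∑ i, |M.herm.eigenvalues i|

/-- The general Randić index `R₋₁` of the underlying graph. -/
def Rm1 (M : MixedGraph V) : ℝ :=
  (1 / 2) * ∑ k, ∑ l, if M.h k l ≠ 0 then ((M.deg k : ℝ) * (M.deg l : ℝ))⁻¹ else 0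

/-- The underlying simple graph of a mixed graph. -/
def underlying (M : MixedGraph V) : SimpleGraph V where
  Adj k l := M.h k l ≠ 0
  symm := ⟨by
    intro k l hkl h0
    exact hkl (by rw [← M.herm.apply k l, h0, star_zero])⟩
  loopless := ⟨fun k hk => hk (M.loopless k)⟩

end MixedGraph

namespace Matrix.IsHermitian

variable {𝕜 n : Type*} [RCLike 𝕜] [Fintype n] [DecidableEq n] {A : Matrix n n 𝕜}

theorem trace_mul_self_eq_sum_sq_eigenvalues (hA : A.IsHermitian) :
    (A * A).trace = ∑ i, (hA.eigenvalues i : 𝕜) ^ 2 := by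
  conv_lhs => rw [hA.spectral_theorem, ← map_mul, Unitary.conjStarAlgAut_apply, trace_mul_cycle,
    Unitary.coe_star_mul_self, one_mul, diagonal_mul_diagonal, trace_diagonal]
  simp [sq]

end Matrix.IsHermitian

theorem two_mul_sum_sq_le_sq_sum_abs_add_sq_sum {ι : Type*} [Fintype ι] (f : ι → ℝ) :
    2 * ∑ i, f i ^ 2 ≤ (∑ i, |f i|) ^ 2 + (∑ i, f i) ^ 2 := by
  rw [Finset.mul_sum, sq, sq, Finset.sum_mul_sum, Finset.sum_mul_sum, ← Finset.sum_add_distrib]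
  refine Finset.sum_le_sum fun i _ => ?_
  rw [← Finset.sum_add_distrib]
  calc 2 * f i ^ 2 = |f i| * |f i| + f i * f i := by rw [abs_mul_abs_self]; ring
    _ ≤ ∑ j, (|f i| * |f j| + f i * f j) :=
      Finset.single_le_sum (f := fun j => |f i| * |f j| + f i * f j)
        (fun j _ => by rw [← abs_mul]; linarith [neg_abs_le (f i * f j)]) (Finset.mem_univ i)

namespace MixedGraph

variable {V : Type} [Fintype V] [DecidableEq V] (M : MixedGraph V)

theorem normSq_h_of_ne_zero {k l : V} (hkl : M.h k l ≠ 0) : Complex.normSq (M.h k l) = 1 := by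
  rcases M.entries k l with h | h | h | h <;> simp_all

theorem normSq_RH (k l : V) :
    Complex.normSq (M.RH k l) = if M.h k l ≠ 0 then ((M.deg k : ℝ) * M.deg l)⁻¹ else 0 := by
  split_ifs with hkl
  · rw [RH, Complex.normSq_div, M.normSq_h_of_ne_zero hkl, Complex.normSq_ofReal,
      mul_mul_mul_comm, Real.mul_self_sqrt (Nat.cast_nonneg _),
      Real.mul_self_sqrt (Nat.cast_nonneg _), one_div]
  · simp [RH, not_not.mp hkl]

theorem trace_RH : M.RH.trace = 0 := by
  simp [trace, RH, M.loopless]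

theorem trace_RH_mul_RH : (M.RH * M.RH).trace = ((2 * M.Rm1 : ℝ) : ℂ) := by
  have hswap (k l : V) : M.RH k l * M.RH l k = Complex.normSq (M.RH k l) := by
    rw [← M.RH_isHermitian.apply l k, Complex.star_def, Complex.mul_conj]
  simp only [trace, diag, mul_apply, hswap, normSq_RH, Rm1]
  push_cast
  ring

theorem sum_eigenvalues_RH : ∑ i, M.RH_isHermitian.eigenvalues i = 0 := by
  have := M.RH_isHermitian.trace_eq_sum_eigenvalues.symm.trans M.trace_RH
  exact (RCLike.ofReal_eq_zero (K := ℂ)).mp (by rwa [RCLike.ofReal_sum])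

theorem sum_sq_eigenvalues_RH : ∑ i, M.RH_isHermitian.eigenvalues i ^ 2 = 2 * M.Rm1 := by
  have := M.RH_isHermitian.trace_mul_self_eq_sum_sq_eigenvalues.symm.trans M.trace_RH_mul_RH
  exact Complex.ofReal_injective (by simpa using this)

end MixedGraph

theorem energyRH_ge_two_sqrt_Rm1_general {V : Type} [Fintype V] [DecidableEq V]
    (M : MixedGraph V) :
    2 * Real.sqrt M.Rm1 ≤ M.energyRH := by
  have hsq : 4 * M.Rm1 ≤ M.energyRH ^ 2 := by
    have := two_mul_sum_sq_le_sq_sum_abs_add_sq_sum M.RH_isHermitian.eigenvalues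
    rw [M.sum_sq_eigenvalues_RH, M.sum_eigenvalues_RH] at this
    unfold MixedGraph.energyRH
    linarith
  have hRm1 : 0 ≤ M.Rm1 := by
    have := Finset.sum_nonneg fun i (_ : i ∈ Finset.univ) => sq_nonneg (M.RH_isHermitian.eigenvalues i)
    linarith [M.sum_sq_eigenvalues_RH]
  have hE : 0 ≤ M.energyRH := Finset.sum_nonneg fun i _ => abs_nonneg _
  refine (pow_le_pow_iff_left₀ (by positivity) hE two_ne_zero).mp ?_
  rwa [mul_pow, Real.sq_sqrt hRm1, show (2 : ℝ) ^ 2 = 4 by norm_num]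

/-- for a mixed graph with no isolated vertices,
`E_{R_H}(M) ≥ 2√(R₋₁(M_U))`. -/
theorem energyRH_ge_two_sqrt_Rm1 {V : Type} [Fintype V] [DecidableEq V]
    (M : MixedGraph V) (hiso : ∀ k, M.deg k ≠ 0) :
    2 * Real.sqrt M.Rm1 ≤ M.energyRH :=
  energyRH_ge_two_sqrt_Rm1_general M
end
end

section
/- Let T be a mixed tree (its underlying graph T_U is a tree) and T' the mixed tree obtained from T by reversing the orientations of all arcs incident with a fixed vertex. Then E_{R_H}(T) = E_{R_H}(T'). -/
open Matrix BigOperators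

noncomputable section
open scoped Classical

/-
Removing `v` splits the tree `T` into branches, one through each neighbour `u` of `v`. Put
`s = -1` on the branches whose edge `vu` is an arc and `s = 1` elsewhere. Since an arc entry
`±i` is negated by conjugation while an edge entry `1` is fixed, and the only edges between
different branches pass through `v`, the reversed matrix is `H(T') = S H(T) S` with
`S = diag s`. Conjugation by the involution `S` keeps the degrees and gives
`R_H(T') = S R_H(T) S`, which has the same characteristic polynomial and hence the same
eigenvalues as `R_H(T)`.
-/

theorem Matrix.charpoly_mul_mul_of_mul_eq_one {n R : Type*} [Fintype n] [DecidableEq n]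
    [CommRing R] {P Q : Matrix n n R} (A : Matrix n n R) (hQP : Q * P = 1) :
    (P * A * Q).charpoly = A.charpoly := by
  rw [Matrix.charpoly_mul_comm, ← mul_assoc, hQP, one_mul]

namespace SimpleGraph

variable {V : Type*} {G : SimpleGraph V}

theorem IsAcyclic.snd_eq_of_mem_support (hG : G.IsAcyclic) {v k l : V} {p : G.Walk v l}
    {q : G.Walk v k} (hp : p.IsPath) (hq : q.IsPath) (hk : k ∈ p.support) (hkv : k ≠ v) :
    q.snd = p.snd := by
  have : q = p.takeUntil k hk :=
    congrArg Subtype.val ((hG.subsingleton_path _ _).elim ⟨q, hq⟩ ⟨_, hp.takeUntil hk⟩)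
  rw [this, Walk.snd_takeUntil hkv]

theorem IsAcyclic.snd_eq_of_adj (hG : G.IsAcyclic) {v k l : V} {p : G.Walk v k}
    {q : G.Walk v l} (hp : p.IsPath) (hq : q.IsPath) (hkv : k ≠ v) (hlv : l ≠ v)
    (hkl : G.Adj k l) : p.snd = q.snd := by
  by_cases hl : l ∈ p.support
  · exact (hG.snd_eq_of_mem_support hp hq hl hlv).symm
  · have hpq : q = p.concat hkl :=
      congrArg Subtype.val ((hG.subsingleton_path _ _).elim ⟨q, hq⟩ ⟨_, hp.concat hl hkl⟩)
    exact hpq ▸ hG.snd_eq_of_mem_support (hp.concat hl hkl) hp (by simp) hkv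

end SimpleGraph

namespace MixedGraph

variable {V : Type} [Fintype V] [DecidableEq V]

def edgeSign (M : MixedGraph V) (k l : V) : ℂ := if (M.h k l).im = 0 then 1 else -1

theorem edgeSign_mul_self (M : MixedGraph V) (k l : V) : M.edgeSign k l * M.edgeSign k l = 1 := by
  unfold edgeSign
  split_ifs <;> norm_num

theorem star_h_eq_edgeSign_mul (M : MixedGraph V) (k l : V) :
    star (M.h k l) = M.edgeSign k l * M.h k l := by
  unfold edgeSign
  rcases M.entries k l with h | h | h | h <;> simp [h]

theorem star_h (M : MixedGraph V) (k l : V) : star (M.h k l) = M.h l k :=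
  M.herm.apply l k

theorem deg_eq_of_h_eq_zero_iff {M M' : MixedGraph V} (h : ∀ k l, M'.h k l = 0 ↔ M.h k l = 0)
    (k : V) : M'.deg k = M.deg k := by
  simp only [deg, ne_eq, h]

theorem RH_eq_diagonal_mul_mul {M M' : MixedGraph V} {s : V → ℂ} (hs : ∀ k, s k * s k = 1)
    (h : ∀ k l, M'.h k l = s k * M.h k l * s l) : M'.RH = diagonal s * M.RH * diagonal s := by
  have hs0 : ∀ k, s k ≠ 0 := fun k h0 => by simpa [h0] using hs k
  have hdeg := deg_eq_of_h_eq_zero_iff (M := M) (M' := M') fun k l => by simp [h, hs0]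
  ext k l
  simp only [RH, mul_diagonal, diagonal_mul, hdeg, h]
  ring

theorem energyRH_eq_of_h_eq_mul_mul {M M' : MixedGraph V} {s : V → ℂ}
    (hs : ∀ k, s k * s k = 1) (h : ∀ k l, M'.h k l = s k * M.h k l * s l) :
    M.energyRH = M'.energyRH := by
  have hcharpoly : M'.RH.charpoly = M.RH.charpoly := by
    rw [RH_eq_diagonal_mul_mul hs h]
    exact charpoly_mul_mul_of_mul_eq_one _
      (by rw [diagonal_mul_diagonal, funext hs, diagonal_one])
  unfold energyRH
  rw [M.RH_isHermitian.eigenvalues_eq_eigenvalues_iff M'.RH_isHermitian |>.mpr hcharpoly.symm]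

section Tree

open SimpleGraph

variable {T : MixedGraph V} (hT : T.underlying.IsTree) (v : V)

def branchSign (k : V) : ℂ :=
  T.edgeSign v ((hT.connected v k).some.toPath : T.underlying.Walk v k).snd

theorem branchSign_mul_self (k : V) : branchSign hT v k * branchSign hT v k = 1 :=
  T.edgeSign_mul_self _ _

theorem branchSign_self : branchSign hT v v = 1 := by
  have := Walk.eq_nil_iff_nil.mpr (Walk.isPath_iff_nil.mp (hT.connected v v).some.toPath.2)
  simp [branchSign, this, edgeSign, T.loopless]

theorem branchSign_of_adj {k : V} (hvk : T.h v k ≠ 0) : branchSign hT v k = T.edgeSign v k := by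
  have hadj : T.underlying.Adj v k := hvk
  have hp : (Walk.cons hadj Walk.nil).IsPath := by simp [hadj.ne]
  unfold branchSign
  rw [hT.isAcyclic.snd_eq_of_mem_support hp (hT.connected v k).some.toPath.2 (by simp)
    hadj.ne.symm, Walk.snd_cons]

theorem branchSign_eq_of_adj {k l : V} (hkv : k ≠ v) (hlv : l ≠ v) (hkl : T.h k l ≠ 0) :
    branchSign hT v k = branchSign hT v l := by
  unfold branchSign
  rw [hT.isAcyclic.snd_eq_of_adj (hT.connected v k).some.toPath.2
    (hT.connected v l).some.toPath.2 hkv hlv hkl]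

theorem h_reverse_eq_branchSign_mul_mul {T' : MixedGraph V}
    (hrev : ∀ k l, T'.h k l = if k = v ∨ l = v then star (T.h k l) else T.h k l) (k l : V) :
    T'.h k l = branchSign hT v k * T.h k l * branchSign hT v l := by
  by_cases h0 : T.h k l = 0
  · simp [hrev, h0]
  rcases eq_or_ne k v with rfl | hkv
  · rw [hrev, if_pos (Or.inl rfl), branchSign_self, branchSign_of_adj hT k h0, one_mul, mul_comm,
      star_h_eq_edgeSign_mul]
  rcases eq_or_ne l v with rfl | hlv
  · have hkl : T.h k l = T.edgeSign l k * T.h l k := by rw [← star_h_eq_edgeSign_mul, star_h]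
    rw [hrev, if_pos (Or.inr rfl), branchSign_self, mul_one, star_h, hkl,
      branchSign_of_adj hT l fun h => h0 (by rw [← star_h, h, star_zero]), ← mul_assoc,
      edgeSign_mul_self, one_mul]
  rw [hrev, if_neg (by tauto), branchSign_eq_of_adj hT v hkv hlv h0, mul_right_comm,
    branchSign_mul_self, one_mul]

end Tree

end MixedGraph

/-- reversing the orientations of all arcs incident with a fixed
vertex of a mixed tree does not change the Hermitian–Randić energy. -/
theorem energyRH_reverse_at_vertex {V : Type} [Fintype V] [DecidableEq V]
    (T T' : MixedGraph V) (hTree : T.underlying.IsTree) (v : V)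
    (hrev : ∀ k l, T'.h k l = if k = v ∨ l = v then star (T.h k l) else T.h k l) :
    T.energyRH = T'.energyRH :=
  MixedGraph.energyRH_eq_of_h_eq_mul_mul (MixedGraph.branchSign_mul_self hTree v)
    (MixedGraph.h_reverse_eq_branchSign_mul_mul hTree v hrev)
end
end
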